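/- The elliptic curve E : Y² = X³ + A·X + B (with A, B ∈ ℤ and 4A³ + 27B² ≠ 0) has a rational point of order 4 if and only if there exist integers z₁, z₂ such that A = −3z₁² + 6z₁z₂² − 2z₂⁴ and B = (2z₁ − z₂²)·(z₁² + 2z₁z₂² − z₂⁴). -/

import Mathlib

/-!
A point `P = (x, y)` has order 4 exactly when `y ≠ 0` and `2P` has `y`-coordinate `0`. With `ℓ` the
tangent slope at `P`, this says `y = ℓ (3x - ℓ²)`; together with `2yℓ = 3x² + A` and the curve
equation it expresses `A` and `B` as the stated polynomials in `z₁ = x`, `z₂ = ℓ`. These rational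
`z₁, z₂` are integers: `x(2P) = z₂² - 2z₁` is a root of the monic `X³ + AX + B`, then
`(3z₁ - z₂²)² = 3 x(2P)² + A` and `z₂² = x(2P) + 2z₁`, so both are integral over `ℤ`. Conversely,
`4A³ + 27B² = -z₂² (3z₁ - z₂²)⁴ (5z₂² - 12z₁)`, so `(z₁, z₂ (3z₁ - z₂²))` is a point with `y ≠ 0`.
-/

/-- The elliptic curve `E : Y² = X³ + A·X + B` over `ℚ`, as an affine Weierstrass curve. -/
noncomputable def E (A B : ℤ) : WeierstrassCurve.Affine ℚ :=
  { a₁ := 0, a₂ := 0, a₃ := 0, a₄ := (A : ℚ), a₆ := (B : ℚ) }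

open Polynomial WeierstrassCurve.Affine

theorem addOrderOf_eq_four_iff {G : Type*} [AddGroup G] (P : G) :
    addOrderOf P = 4 ↔ P + P ≠ 0 ∧ P + P + (P + P) = 0 := by
  have : Fact (Nat.Prime 2) := ⟨Nat.prime_two⟩
  rw [← two_nsmul, ← two_nsmul, ← mul_nsmul]
  refine ⟨fun h ↦ ⟨fun h2 ↦ ?_, show 4 • P = 0 from h ▸ addOrderOf_nsmul_eq_zero P⟩,
    fun ⟨h2, h4⟩ ↦ addOrderOf_eq_prime_pow (p := 2) (n := 1) (by simpa using h2) h4⟩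
  have := addOrderOf_le_of_nsmul_eq_zero two_pos h2
  omega

namespace WeierstrassCurve.Affine.Point

variable {F : Type*} [Field F] [DecidableEq F] {W : WeierstrassCurve.Affine F} {x y : F}

theorem some_add_self_eq_zero_iff (h : W.Nonsingular x y) :
    some x y h + some x y h = 0 ↔ y = W.negY x y := by
  rw [add_eq_zero_iff_eq_neg, neg_some, some.injEq]
  simp

theorem addOrderOf_some_eq_four_iff (h : W.Nonsingular x y) :
    addOrderOf (some x y h) = 4 ↔ y ≠ W.negY x y ∧
      W.addY x x y (W.slope x x y y) =
        W.negY (W.addX x x (W.slope x x y y)) (W.addY x x y (W.slope x x y y)) := by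
  simp only [addOrderOf_eq_four_iff, ne_eq, some_add_self_eq_zero_iff]
  refine and_congr_right fun hy ↦ ?_
  simp only [add_self_of_Y_ne hy, some_add_self_eq_zero_iff]

end WeierstrassCurve.Affine.Point

theorem isIntegral_of_order_four_coeffs {R K : Type*} [CommRing R] [CommRing K] [Algebra R K]
    {a b : R} {z₁ z₂ : K}
    (hA : algebraMap R K a = -3 * z₁ ^ 2 + 6 * z₁ * z₂ ^ 2 - 2 * z₂ ^ 4)
    (hB : algebraMap R K b = (2 * z₁ - z₂ ^ 2) * (z₁ ^ 2 + 2 * z₁ * z₂ ^ 2 - z₂ ^ 4)) :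
    IsIntegral R z₁ ∧ IsIntegral R z₂ := by
  have ha := isIntegral_algebraMap (R := R) (A := K) (x := a)
  have he : IsIntegral R (z₂ ^ 2 - 2 * z₁) := by
    refine ⟨X ^ 3 + (C a * X + C b), monic_X_pow_add (degree_linear_lt.trans (by norm_num)), ?_⟩
    simp only [eval₂_add, eval₂_X_pow, eval₂_mul, eval₂_C, eval₂_X, hA, hB]
    ring
  have ht : IsIntegral R (3 * z₁ - z₂ ^ 2) := by
    refine .of_pow two_pos ?_
    have hsq : (3 * z₁ - z₂ ^ 2) ^ 2 = 3 * (z₂ ^ 2 - 2 * z₁) ^ 2 + algebraMap R K a := by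
      rw [hA]; ring
    rw [hsq]
    simpa using ((he.pow 2).nsmul 3).add ha
  have hz₁ : IsIntegral R z₁ := by
    convert he.add ht using 1
    ring
  refine ⟨hz₁, .of_pow two_pos ?_⟩
  convert he.add (hz₁.nsmul 2) using 1
  simp only [nsmul_eq_mul]
  ring

theorem E_negY (A B : ℤ) (x y : ℚ) : (E A B).negY x y = -y := by
  simp [negY, E]

theorem E_slope_self {A B : ℤ} {x y : ℚ} (hy : y ≠ 0) :
    (E A B).slope x x y y = (3 * x ^ 2 + A) / (2 * y) := by
  rw [slope_of_Y_ne rfl (by rwa [E_negY, ne_eq, self_eq_neg])]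
  simp [E, two_mul]

theorem E_addY_self {A B : ℤ} (x y ℓ : ℚ) :
    (E A B).addY x x y ℓ = ℓ * (3 * x - ℓ ^ 2) - y := by
  simp only [addY, negY, negAddY, addX, E, zero_mul, add_zero, sub_zero]
  ring

theorem E_addOrderOf_some_eq_four_iff {A B : ℤ} {x y : ℚ} (h : (E A B).Nonsingular x y) :
    addOrderOf (Point.some x y h) = 4 ↔
      ∃ ℓ, y ≠ 0 ∧ 2 * y * ℓ = 3 * x ^ 2 + A ∧ y = ℓ * (3 * x - ℓ ^ 2) := by
  simp only [Point.addOrderOf_some_eq_four_iff, E_negY, ne_eq, self_eq_neg, E_addY_self]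
  by_cases hy : y = 0
  · simp [hy]
  have hslope (ℓ : ℚ) : 2 * y * ℓ = 3 * x ^ 2 + A ↔ ℓ = (E A B).slope x x y y := by
    rw [E_slope_self hy, eq_div_iff (by simpa using hy), mul_comm]
  simp only [hslope, hy, not_false_eq_true, true_and, exists_eq_left]
  exact sub_eq_zero.trans eq_comm

theorem E_equation_iff {A B : ℤ} {x y : ℚ} :
    (E A B).Equation x y ↔ y ^ 2 = x ^ 3 + A * x + B := by
  simp [equation_iff, E]

theorem E_nonsingular_of_equation {A B : ℤ} {x y : ℚ} (hy : y ≠ 0)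
    (h : y ^ 2 = x ^ 3 + A * x + B) : (E A B).Nonsingular x y := by
  refine (nonsingular_iff x y).mpr ⟨E_equation_iff.mpr h, .inr ?_⟩
  simpa [E, ← two_mul, eq_neg_iff_add_eq_zero] using hy

theorem exists_addOrderOf_eq_four_iff_exists_rat {A B : ℤ} (hΔ : 4 * A ^ 3 + 27 * B ^ 2 ≠ 0) :
    (∃ P : (E A B).Point, addOrderOf P = 4) ↔
      ∃ z₁ z₂ : ℚ, (A : ℚ) = -3 * z₁ ^ 2 + 6 * z₁ * z₂ ^ 2 - 2 * z₂ ^ 4 ∧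
        (B : ℚ) = (2 * z₁ - z₂ ^ 2) * (z₁ ^ 2 + 2 * z₁ * z₂ ^ 2 - z₂ ^ 4) := by
  constructor
  · rintro ⟨_ | ⟨x, y, h⟩, hP⟩
    · simp [← Point.zero_def] at hP
    obtain ⟨ℓ, -, hℓ, hyℓ⟩ := (E_addOrderOf_some_eq_four_iff h).mp hP
    have hxy := E_equation_iff.mp h.1
    exact ⟨x, ℓ, by linear_combination -hℓ + 2 * ℓ * hyℓ,
      by linear_combination -hxy + (y + ℓ * (3 * x - ℓ ^ 2)) * hyℓ + x * hℓ - 2 * x * ℓ * hyℓ⟩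
  · rintro ⟨z₁, z₂, hA, hB⟩
    have hy : z₂ * (3 * z₁ - z₂ ^ 2) ≠ 0 := by
      intro hy
      refine hΔ (Int.cast_injective (α := ℚ) ?_)
      push_cast
      rw [hA, hB]
      linear_combination -z₂ * (3 * z₁ - z₂ ^ 2) ^ 3 * (5 * z₂ ^ 2 - 12 * z₁) * hy
    have h := E_nonsingular_of_equation (A := A) (B := B) (x := z₁) hy (by rw [hA, hB]; ring)
    exact ⟨_, (E_addOrderOf_some_eq_four_iff h).mpr ⟨z₂, hy, by rw [hA]; ring, by ring⟩⟩

theorem order_four_iff (A B : ℤ) (hΔ : 4 * A ^ 3 + 27 * B ^ 2 ≠ 0) :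
    (∃ P : (E A B).Point, addOrderOf P = 4) ↔
      ∃ z₁ z₂ : ℤ, A = -3 * z₁ ^ 2 + 6 * z₁ * z₂ ^ 2 - 2 * z₂ ^ 4 ∧
        B = (2 * z₁ - z₂ ^ 2) * (z₁ ^ 2 + 2 * z₁ * z₂ ^ 2 - z₂ ^ 4) := by
  rw [exists_addOrderOf_eq_four_iff_exists_rat hΔ]
  constructor
  · rintro ⟨z₁, z₂, hA, hB⟩
    obtain ⟨⟨n₁, rfl⟩, ⟨n₂, rfl⟩⟩ := (isIntegral_of_order_four_coeffs (R := ℤ) hA hB).imp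
      IsIntegrallyClosed.isIntegral_iff.mp IsIntegrallyClosed.isIntegral_iff.mp
    simp only [eq_intCast] at hA hB
    exact ⟨n₁, n₂, by exact_mod_cast hA, by exact_mod_cast hB⟩
  · rintro ⟨z₁, z₂, rfl, rfl⟩
    exact ⟨z₁, z₂, by push_cast; ring, by push_cast; ring⟩
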